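/- arXiv:2507.17077 — 5 statements merged into one kernel-verified Lean document; each statement's English description precedes it below -/
import Mathlib

section
/- Let r ∈ [0,1), θ ∈ ℝ, and ṙ, θ̇ ∈ ℝ. Suppose that for every integer n ≥ 1 the equation ṙ·(2rⁿ − r^{2n}·cos(nθ) − cos(nθ)) = −r·(1 − r^{2n})·θ̇·sin(nθ) holds. Then ṙ = 0, and moreover at least one of the following holds: (1) r ≠ 0 and sin(nθ) = 0 for all n ≥ 1 (equivalently θ is an integer multiple of π); (2) r ≠ 0 and θ̇ = 0; (3) r = 0. -/
/-!
Rearranged, the `n`-th identity says that `a n := ṙ cos nθ - r θ̇ sin nθ`, the real part of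
`(ṙ + i r θ̇) e^{inθ}`, equals `rⁿ (2ṙ - rⁿ (ṙ cos nθ + r θ̇ sin nθ))`, so `a n → 0`. Unless
`e^{iθ} = ±1`, a sequence `Re (z wⁿ)` with `|w| = 1` can only tend to `0` when `z = 0`, giving
`ṙ = r θ̇ = 0`. When `sin θ = 0` the identity for `n = 2` reads `-ṙ (1 - r²)² = 0`.
-/

open Filter Topology Real

lemma mul_cos_sub_mul_sin_sq_add_sq (A B x : ℝ) :
    (A * cos x - B * sin x) ^ 2 + (A * sin x + B * cos x) ^ 2 = A ^ 2 + B ^ 2 := by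
  linear_combination (A ^ 2 + B ^ 2) * sin_sq_add_cos_sq x

lemma abs_mul_cos_add_mul_sin_le (A B x : ℝ) : |A * cos x + B * sin x| ≤ |A| + |B| := by
  calc |A * cos x + B * sin x| ≤ |A| * |cos x| + |B| * |sin x| := by
        simpa only [abs_mul] using abs_add_le (A * cos x) (B * sin x)
    _ ≤ |A| * 1 + |B| * 1 := by gcongr <;> simp only [abs_cos_le_one, abs_sin_le_one]
    _ = |A| + |B| := by ring

/-- `a n = A cos nθ - B sin nθ` and `b n = A sin nθ + B cos nθ` are the real and imaginary parts of
`(A + B i) e^{inθ}`, so `a n ^ 2 + b n ^ 2` is constant, while `a (n + 2) - a n = -2 sin θ • b (n + 1)`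
forces `b → 0` along with `a`. -/
theorem eq_zero_of_tendsto_mul_cos_sub_mul_sin {A B θ : ℝ} (hθ : sin θ ≠ 0)
    (h : Tendsto (fun n : ℕ => A * cos (n * θ) - B * sin (n * θ)) atTop (𝓝 0)) :
    A = 0 ∧ B = 0 := by
  set a : ℕ → ℝ := fun n => A * cos (n * θ) - B * sin (n * θ)
  set b : ℕ → ℝ := fun n => A * sin (n * θ) + B * cos (n * θ)
  have hrec : ∀ n, b (n + 1) = (a n - a (n + 2)) / (2 * sin θ) := by
    intro n
    rw [eq_div_iff (mul_ne_zero two_ne_zero hθ)]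
    have e₀ : ((n : ℕ) : ℝ) * θ = ((n + 1 : ℕ) : ℝ) * θ - θ := by push_cast; ring
    have e₂ : ((n + 2 : ℕ) : ℝ) * θ = ((n + 1 : ℕ) : ℝ) * θ + θ := by push_cast; ring
    simp only [a, b, e₀, e₂, cos_add, sin_add, cos_sub, sin_sub]
    ring
  have hb : Tendsto b atTop (𝓝 0) := by
    rw [← tendsto_add_atTop_iff_nat 1]
    simp_rw [hrec]
    simpa using (h.sub (h.comp (tendsto_add_atTop_nat 2))).div_const (2 * sin θ)
  have hnorm : Tendsto (fun n => a n ^ 2 + b n ^ 2) atTop (𝓝 (A ^ 2 + B ^ 2)) := by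
    simp only [a, b, mul_cos_sub_mul_sin_sq_add_sq]
    exact tendsto_const_nhds
  have hsum : A ^ 2 + B ^ 2 = 0 :=
    tendsto_nhds_unique hnorm (by simpa using (h.pow 2).add (hb.pow 2))
  constructor <;> nlinarith [sq_nonneg A, sq_nonneg B]

lemma tendsto_mul_cos_sub_mul_sin_of_forall_eq {r θ A B : ℝ} (hr0 : 0 ≤ r) (hr1 : r < 1)
    (h : ∀ n : ℕ, 1 ≤ n →
      A * (2 * r ^ n - r ^ (2 * n) * cos (n * θ) - cos (n * θ)) =
        -(B * (1 - r ^ (2 * n)) * sin (n * θ))) :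
    Tendsto (fun n : ℕ => A * cos (n * θ) - B * sin (n * θ)) atTop (𝓝 0) := by
  have hpow : Tendsto (fun n : ℕ => (2 * |A| + (|A| + |B|)) * r ^ n) atTop (𝓝 0) := by
    simpa using (tendsto_pow_atTop_nhds_zero_of_lt_one hr0 hr1).const_mul (2 * |A| + (|A| + |B|))
  refine squeeze_zero_norm' ?_ hpow
  filter_upwards [eventually_ge_atTop 1] with n hn
  have hrn : 0 ≤ r ^ n := pow_nonneg hr0 n
  have hrn1 : r ^ n ≤ 1 := pow_le_one₀ hr0 hr1.le
  have hfactor : A * cos (n * θ) - B * sin (n * θ) =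
      r ^ n * (2 * A - r ^ n * (A * cos (n * θ) + B * sin (n * θ))) := by
    have hn' := h n hn
    rw [pow_mul'] at hn'
    linear_combination -hn'
  rw [hfactor, norm_mul, Real.norm_of_nonneg hrn, mul_comm _ (r ^ n)]
  gcongr
  calc ‖2 * A - r ^ n * (A * cos (n * θ) + B * sin (n * θ))‖
      ≤ |2 * A| + |r ^ n * (A * cos (n * θ) + B * sin (n * θ))| := abs_sub _ _
    _ ≤ 2 * |A| + 1 * (|A| + |B|) := by
        rw [abs_mul, abs_mul, abs_two, abs_of_nonneg hrn]
        gcongr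
        exact abs_mul_cos_add_mul_sin_le A B _
    _ = 2 * |A| + (|A| + |B|) := by ring

/-- Degeneracy trichotomy for the multiplier identities. -/
theorem stmt_0 (r θ rdot θdot : ℝ) (hr0 : 0 ≤ r) (hr1 : r < 1)
    (h : ∀ n : ℕ, 1 ≤ n →
      rdot * (2 * r ^ n - r ^ (2 * n) * Real.cos (n * θ) - Real.cos (n * θ)) =
        - (r * (1 - r ^ (2 * n)) * θdot * Real.sin (n * θ))) :
    rdot = 0 ∧
      ((r ≠ 0 ∧ ∀ n : ℕ, 1 ≤ n → Real.sin (n * θ) = 0) ∨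
        (r ≠ 0 ∧ θdot = 0) ∨ r = 0) := by
  by_cases hs : sin θ = 0
  · have hrdot : rdot = 0 := by
      have h₂ := h 2 le_add_self
      have hcos : cos ((2 : ℕ) * θ) = 1 := by
        rw [Nat.cast_two, cos_two_mul, cos_sq', hs]; norm_num
      have hsin : sin ((2 : ℕ) * θ) = 0 := by
        rw [Nat.cast_two, sin_two_mul, hs, mul_zero, zero_mul]
      rw [hcos, hsin] at h₂
      have hr2 : (1 - r ^ 2) ^ 2 ≠ 0 := pow_ne_zero 2 (by nlinarith)
      exact (mul_eq_zero.mp (by linear_combination -h₂ : rdot * (1 - r ^ 2) ^ 2 = 0)).resolve_right hr2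
    refine ⟨hrdot, ?_⟩
    rcases eq_or_ne r 0 with hr | hr
    · exact Or.inr (Or.inr hr)
    obtain ⟨k, rfl⟩ := sin_eq_zero_iff.mp hs
    exact Or.inl ⟨hr, fun n _ => by simpa [← mul_assoc] using sin_int_mul_pi (n * k)⟩
  · have hlim := tendsto_mul_cos_sub_mul_sin_of_forall_eq (A := rdot) (B := r * θdot) hr0 hr1
      fun n hn => by linear_combination h n hn
    obtain ⟨hrdot, hc⟩ := eq_zero_of_tendsto_mul_cos_sub_mul_sin hs hlim
    refine ⟨hrdot, ?_⟩
    rcases eq_or_ne r 0 with hr | hr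
    · exact Or.inr (Or.inr hr)
    · exact Or.inr (Or.inl ⟨hr, (mul_eq_zero.mp hc).resolve_left hr⟩)
end

section
/- Let r ∈ (0,1), θ ∈ ℝ, and ṙ, θ̇ ∈ ℝ with ṙ ≠ 0, and suppose θ is a rational multiple of π. If for every integer n ≥ 1 one has ṙ·(2rⁿ − r^{2n}·cos(nθ) − cos(nθ)) = −r·(1 − r^{2n})·θ̇·sin(nθ), then a contradiction follows (i.e., no such data exist). -/
/-!
Some positive multiple `n θ` of a rational multiple `θ` of `π` is a multiple of `2π`. At such an
`n` the identity collapses to `ṙ (2 rⁿ - r²ⁿ - 1) = 0`, that is `ṙ (rⁿ - 1)² = 0`, which is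
impossible for `ṙ ≠ 0` and `0 ≤ r < 1`.
-/

open Real

theorem Rat.exists_pos_nat_mul_mul_pi_eq_int_mul_two_pi (q : ℚ) :
    ∃ n : ℕ, 0 < n ∧ ∃ k : ℤ, (n : ℝ) * (q * π) = k * (2 * π) := by
  refine ⟨2 * q.den, by positivity, q.num, ?_⟩
  have hden : (q.den : ℝ) ≠ 0 := by exact_mod_cast q.den_pos.ne'
  rw [Rat.cast_def]
  push_cast
  field_simp

theorem exists_pos_nat_cos_eq_one_sin_eq_zero_of_eq_rat_mul_pi {θ : ℝ}
    (hθ : ∃ q : ℚ, θ = q * π) : ∃ n : ℕ, 0 < n ∧ cos (n * θ) = 1 ∧ sin (n * θ) = 0 := by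
  obtain ⟨q, rfl⟩ := hθ
  obtain ⟨n, hn, k, hk⟩ := q.exists_pos_nat_mul_mul_pi_eq_int_mul_two_pi
  have hcos : cos (n * (q * π)) = 1 := by rw [hk, cos_int_mul_two_pi]
  exact ⟨n, hn, hcos, sin_eq_zero_iff_cos_eq.mpr (Or.inl hcos)⟩

theorem two_mul_pow_sub_pow_two_mul_sub_one_ne_zero {R : Type*} [CommRing R] [LinearOrder R]
    [IsStrictOrderedRing R] {r : R} (hr0 : 0 ≤ r) (hr1 : r < 1) {n : ℕ} (hn : n ≠ 0) :
    2 * r ^ n - r ^ (2 * n) - 1 ≠ 0 := by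
  have hrn : r ^ n < 1 := pow_lt_one₀ hr0 hr1 hn
  have hsq : 2 * r ^ n - r ^ (2 * n) - 1 = -(r ^ n - 1) ^ 2 := by ring
  rw [hsq, neg_ne_zero]
  exact pow_ne_zero 2 (sub_ne_zero.mpr hrn.ne)

/-- Rational-angle case of the degeneracy trichotomy: no such data exist. -/
theorem stmt_1 (r θ rdot θdot : ℝ) (hr0 : 0 < r) (hr1 : r < 1) (hrdot : rdot ≠ 0)
    (hθ : ∃ q : ℚ, θ = (q : ℝ) * Real.pi)
    (h : ∀ n : ℕ, 1 ≤ n →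
      rdot * (2 * r ^ n - r ^ (2 * n) * Real.cos (n * θ) - Real.cos (n * θ)) =
        - (r * (1 - r ^ (2 * n)) * θdot * Real.sin (n * θ))) :
    False := by
  obtain ⟨n, hn, hcos, hsin⟩ := exists_pos_nat_cos_eq_one_sin_eq_zero_of_eq_rat_mul_pi hθ
  have hn_eq := h n hn
  rw [hcos, hsin, mul_one, mul_zero, neg_zero] at hn_eq
  exact mul_ne_zero hrdot (two_mul_pow_sub_pow_two_mul_sub_one_ne_zero hr0.le hr1 hn.ne') hn_eq
end

section
/- Let θ ∈ ℝ be such that θ/π is irrational, and let a, b ∈ ℝ with (a, b) ≠ (0, 0). Then there exist a constant c > 0 and infinitely many positive integers n such that sin(nθ) > c and |a − b·cot(nθ)| > c. -/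
/-! In the compact circle `ℝ ⧸ 2πℤ` the cluster points of the natural multiples of a point fill
the closure of its integer multiples, which is the whole circle when `θ / 2π` is irrational. So
`nθ` returns infinitely often to any nonempty open `2π`-periodic set, for instance
`{x | c < sin x ∧ c < |a - b cot x|}` with `0 < c` below `sin x₀` and `|a - b cot x₀|` at a point
`x₀` (`π / 2` or `π / 4`) where both are positive. -/

open Filter Real

theorem frequently_nat_mul_mem_of_isOpen_of_periodic {p θ : ℝ} (hp : 0 < p)
    (hθ : Irrational (θ / p)) {S : Set ℝ} (hS : IsOpen S) (hSp : Function.Periodic (· ∈ S) p)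
    (hne : S.Nonempty) : ∃ᶠ n : ℕ in atTop, (n : ℝ) * θ ∈ S := by
  have := Fact.mk hp
  obtain ⟨x, hx⟩ := hne
  have hcluster : MapClusterPt (x : AddCircle p) atTop (· • (θ : AddCircle p) : ℕ → _) :=
    ((mapClusterPt_atTop_nsmul_tfae _ _).out 0 3).2 (AddCircle.denseRange_zsmul_coe_iff.2 hθ _)
  have hU : IsOpen ((↑) '' S : Set (AddCircle p)) := QuotientAddGroup.isOpenMap_coe S hS
  refine (mapClusterPt_iff_frequently.1 hcluster _ (hU.mem_nhds ⟨x, hx, rfl⟩)).mono ?_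
  rintro n ⟨y, hy, hyn⟩
  rw [← AddCircle.coe_nsmul, nsmul_eq_mul] at hyn
  have hlift := congrArg hSp.lift hyn
  simp only [hSp.lift_coe, eq_iff_iff] at hlift
  exact hlift.1 hy

theorem exists_sin_pos_and_sub_mul_cot_ne_zero {a b : ℝ} (hab : (a, b) ≠ (0, 0)) :
    ∃ x, 0 < sin x ∧ a - b * (cos x / sin x) ≠ 0 := by
  rcases eq_or_ne a 0 with rfl | ha
  · have hb : b ≠ 0 := by simpa using hab
    refine ⟨π / 4, sin_pos_of_pos_of_lt_pi (by positivity) (by linarith [pi_pos]), ?_⟩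
    rw [cos_pi_div_four, sin_pi_div_four, div_self (by positivity)]
    simpa using hb
  · exact ⟨π / 2, by simp, by simpa using ha⟩

theorem isOpen_setOf_lt_sin_and_lt_abs_sub_mul_cot {c : ℝ} (hc : 0 ≤ c) (a b : ℝ) :
    IsOpen {x : ℝ | c < sin x ∧ c < |a - b * (cos x / sin x)|} := by
  have hsin : IsOpen {x : ℝ | c < sin x} := isOpen_lt continuous_const continuous_sin
  have hcont : ContinuousOn (fun x ↦ |a - b * (cos x / sin x)|) {x | c < sin x} :=
    (continuousOn_const.sub (continuousOn_const.mul (continuous_cos.continuousOn.div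
      continuous_sin.continuousOn fun x hx ↦ (hc.trans_lt hx).ne'))).abs
  exact hcont.isOpen_inter_preimage hsin isOpen_Ioi

/-- Equidistribution consequence: infinitely many n with sin(nθ) and |a - b·cot(nθ)|
bounded below. -/
theorem stmt_2 (θ a b : ℝ) (hθ : Irrational (θ / Real.pi)) (hab : (a, b) ≠ (0, 0)) :
    ∃ c > 0, {n : ℕ | 0 < n ∧ c < Real.sin (n * θ) ∧
      c < |a - b * (Real.cos (n * θ) / Real.sin (n * θ))|}.Infinite := by
  obtain ⟨x, hsin, hcot⟩ := exists_sin_pos_and_sub_mul_cot_ne_zero hab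
  obtain ⟨c, hc, hcx⟩ := exists_between (lt_min hsin (abs_pos.2 hcot))
  have hθ' : Irrational (θ / (2 * π)) := by
    simpa [div_div, mul_comm] using hθ.div_natCast two_ne_zero
  have hfreq := frequently_nat_mul_mem_of_isOpen_of_periodic two_pi_pos hθ'
    (isOpen_setOf_lt_sin_and_lt_abs_sub_mul_cot hc.le a b) (fun y ↦ by simp)
    ⟨x, lt_min_iff.1 hcx⟩
  refine ⟨c, hc, Nat.frequently_atTop_iff_infinite.1 ?_⟩
  exact (hfreq.and_eventually (eventually_gt_atTop 0)).mono fun n ⟨hn, hn0⟩ ↦ ⟨hn0, hn⟩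
end

section
/- Let r ∈ (0,1), ṙ ∈ ℝ with ṙ ≠ 0, θ ∈ ℝ with θ/π irrational, and θ̇ ∈ ℝ. Then the family of identities ṙ·(2rⁿ/sin(nθ) − r^{2n}·cot(nθ) − cot(nθ)) = −r·θ̇ + r^{2n}·θ̇ cannot hold for all n ≥ 1. -/
open Filter Real Topology

/-!
Since θ/π is irrational, `sin (n θ) ≠ 0`, and clearing it from the `n`-th identity gives
`ṙ cos (n θ) - r θ̇ sin (n θ) = O(rⁿ) → 0`. The companion sequence `b cos (n θ) - a sin (n θ)` of
`a cos (n θ) + b sin (n θ)` makes the pair a vector of constant length `√(a² + b²)` rotated by `θ`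
at each step; as `sin θ ≠ 0`, the companion is recovered from two consecutive terms, so it tends to
`0` as well, forcing `a = b = 0` and contradicting `ṙ ≠ 0`.
-/

theorem Real.sin_natCast_mul_ne_zero_of_irrational {θ : ℝ} (hθ : Irrational (θ / π)) {n : ℕ}
    (hn : n ≠ 0) : sin (n * θ) ≠ 0 := by
  rw [Ne, sin_eq_zero_iff, not_exists]
  intro k hk
  refine (hθ.mul_natCast hn).ne_int k ?_
  rw [div_mul_eq_mul_div, mul_comm, ← hk, mul_div_cancel_right₀ _ pi_ne_zero]

theorem eq_zero_of_tendsto_cos_add_sin {a b θ : ℝ} (hθ : sin θ ≠ 0)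
    (h : Tendsto (fun n : ℕ => a * cos (n * θ) + b * sin (n * θ)) atTop (𝓝 0)) :
    a = 0 ∧ b = 0 := by
  set f := fun n : ℕ => a * cos (n * θ) + b * sin (n * θ)
  set g := fun n : ℕ => b * cos (n * θ) - a * sin (n * θ)
  have hf_succ (n : ℕ) : f (n + 1) = f n * cos θ + g n * sin θ := by
    simp only [f, g, Nat.cast_succ, add_mul, one_mul, cos_add, sin_add]
    ring
  have hnorm (n : ℕ) : f n ^ 2 + g n ^ 2 = a ^ 2 + b ^ 2 := by
    have := sin_sq_add_cos_sq (n * θ)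
    linear_combination (a ^ 2 + b ^ 2) * this
  have hg : Tendsto g atTop (𝓝 0) := by
    have := ((h.comp (tendsto_add_atTop_nat 1)).sub (h.mul_const (cos θ))).div_const (sin θ)
    rw [zero_mul, sub_zero, zero_div] at this
    refine this.congr fun n => ?_
    simp only [Function.comp_apply, hf_succ]
    field_simp
    ring
  have hsq : Tendsto (fun n => f n ^ 2 + g n ^ 2) atTop (𝓝 0) := by
    simpa using (h.pow 2).add (hg.pow 2)
  simp only [hnorm, tendsto_const_nhds_iff] at hsq
  constructor <;> nlinarith [sq_nonneg a, sq_nonneg b]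

theorem tendsto_pow_mul_cos_add_sin {r : ℝ} (hr : |r| < 1) (a b θ : ℝ) :
    Tendsto (fun n : ℕ => r ^ n * (a * cos (n * θ) + b * sin (n * θ))) atTop (𝓝 0) := by
  refine (tendsto_pow_atTop_nhds_zero_of_abs_lt_one hr).zero_mul_isBoundedUnder_le
    (isBoundedUnder_of ⟨|a| + |b|, fun n => ?_⟩)
  calc ‖a * cos (n * θ) + b * sin (n * θ)‖ ≤ |a| * |cos (n * θ)| + |b| * |sin (n * θ)| := by
        rw [Real.norm_eq_abs, ← abs_mul, ← abs_mul]; exact abs_add_le _ _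
    _ ≤ |a| * 1 + |b| * 1 := by gcongr <;> [exact abs_cos_le_one _; exact abs_sin_le_one _]
    _ = |a| + |b| := by ring

/-- Irrational-angle case: the rearranged multiplier identities cannot all hold. -/
theorem stmt_12 (r rdot θ θdot : ℝ) (hr0 : 0 < r) (hr1 : r < 1) (hrdot : rdot ≠ 0)
    (hθ : Irrational (θ / Real.pi)) :
    ¬ (∀ n : ℕ, 1 ≤ n →
      rdot * (2 * r ^ n / Real.sin (n * θ)
          - r ^ (2 * n) * (Real.cos (n * θ) / Real.sin (n * θ))
          - Real.cos (n * θ) / Real.sin (n * θ)) =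
        - (r * θdot) + r ^ (2 * n) * θdot) := by
  intro H
  have hsin {n : ℕ} (hn : 1 ≤ n) : sin (n * θ) ≠ 0 :=
    sin_natCast_mul_ne_zero_of_irrational hθ (by omega)
  have hcleared {n : ℕ} (hn : 1 ≤ n) :
      rdot * cos (n * θ) + -(r * θdot) * sin (n * θ) =
        2 * rdot * r ^ n - (r ^ 2) ^ n * (rdot * cos (n * θ) + θdot * sin (n * θ)) := by
    have h := H n hn
    field_simp [hsin hn] at h
    rw [← pow_mul]
    linarith
  have hr : |r| < 1 := abs_lt.2 ⟨by linarith, hr1⟩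
  have hsmall : Tendsto (fun n : ℕ => 2 * rdot * r ^ n
      - (r ^ 2) ^ n * (rdot * cos (n * θ) + θdot * sin (n * θ))) atTop (𝓝 0) := by
    have hr2 : |r ^ 2| < 1 := by rw [abs_pow]; exact pow_lt_one₀ (abs_nonneg r) hr two_ne_zero
    simpa using ((tendsto_pow_atTop_nhds_zero_of_abs_lt_one hr).const_mul (2 * rdot)).sub
      (tendsto_pow_mul_cos_add_sin hr2 rdot θdot θ)
  have hlim := hsmall.congr' ((eventually_ge_atTop 1).mono fun n hn => (hcleared hn).symm)
  exact hrdot (eq_zero_of_tendsto_cos_add_sin (by simpa using hsin le_rfl) hlim).1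
end

section
/- Let h : ℝ → ℝ be defined by h(x) = lim_{n→∞} F^{−n}(Gⁿ(x)), where F, G : ℝ → ℝ are strictly increasing smooth maps with F(x+1) = F(x)+d, G(x+1) = G(x)+d for an integer d ≥ 2, F(0) = G(0) = 0, and F'(x) > 1, G'(x) > 1 for all x. Then the limit exists for every x ∈ ℝ, h is a strictly increasing homeomorphism of ℝ with h(x+1) = h(x)+1, and h ∘ G = F ∘ h. -/
open Filter

/-- Uniform expansion from deriv > 1, smoothness and periodicity. -/
lemma stmt14_expand (d : ℤ) (F : ℝ → ℝ) (hFsm : ContDiff ℝ (⊤ : ℕ∞) F)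
    (hFper : ∀ x, F (x + 1) = F x + d) (hF' : ∀ x, 1 < deriv F x) :
    ∃ l : ℝ, 1 < l ∧ ∀ x y : ℝ, x ≤ y → l * (y - x) ≤ F y - F x := by
  have hder : Continuous (deriv F) := hFsm.continuous_deriv (by simp)
  have hdiff : Differentiable ℝ F := hFsm.differentiable (by simp)
  have hper : Function.Periodic (deriv F) 1 := by
    intro x
    have h1 : deriv (fun y => F (y + 1)) x = deriv F (x + 1) := deriv_comp_add_const F 1 x
    have h2 : (fun y => F (y + 1)) = fun y => F y + (d : ℝ) := funext hFper
    rw [h2] at h1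
    rw [← h1, deriv_add_const]
  obtain ⟨c, hc, hmin⟩ := isCompact_Icc.exists_isMinOn (Set.nonempty_Icc.2 zero_le_one)
    (hder.continuousOn (s := Set.Icc (0:ℝ) 1))
  refine ⟨deriv F c, hF' c, ?_⟩
  have hlb : ∀ z, deriv F c ≤ deriv F z := by
    intro z
    have h1 : deriv F z = deriv F (Int.fract z) := by
      have h := hper.sub_int_mul_eq (x := z) ⌊z⌋
      rw [mul_one] at h
      rw [Int.fract]
      exact h.symm
    rw [h1]
    exact hmin ⟨Int.fract_nonneg z, (Int.fract_lt_one z).le⟩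
  intro x y hxy
  rcases eq_or_lt_of_le hxy with rfl | hlt
  · simp
  obtain ⟨z, hz, hslope⟩ := exists_deriv_eq_slope F hlt (hdiff.continuous.continuousOn)
    (fun w _ => (hdiff w).differentiableWithinAt)
  have h0 : (0:ℝ) < y - x := sub_pos.2 hlt
  calc deriv F c * (y - x) ≤ deriv F z * (y - x) :=
        mul_le_mul_of_nonneg_right (hlb z) h0.le
    _ = F y - F x := by rw [hslope]; field_simp

lemma stmt14_per_int (d : ℤ) (F : ℝ → ℝ) (hFper : ∀ x, F (x + 1) = F x + d) :
    ∀ (k : ℤ) (x : ℝ), F (x + k) = F x + k * d := by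
  intro k
  induction k using Int.induction_on with
  | zero => simp
  | succ n ih =>
      intro x
      have h1 : (x + ((n:ℤ) + 1 : ℤ) : ℝ) = (x + (n:ℤ)) + 1 := by push_cast; ring
      rw [h1, hFper, ih]
      push_cast; ring
  | pred n ih =>
      intro x
      have h1 : (x + (-(n:ℤ)-1 : ℤ) : ℝ) + 1 = x + (-(n:ℤ) : ℤ) := by push_cast; ring
      have h2 := hFper (x + (-(n:ℤ)-1 : ℤ) : ℝ)
      rw [h1, ih] at h2
      have h3 : F (x + (-(n:ℤ)-1 : ℤ) : ℝ) = F x + ((-(n:ℤ) : ℤ) : ℝ) * d - d := by linarith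
      rw [h3]; push_cast; ring

/-- The conjugacy h(x) = lim F⁻ⁿ(Gⁿ x) between two expanding lifts of degree-d
circle maps: the limit exists, and h is a strictly increasing homeomorphism of ℝ
commuting with the shift and conjugating G to F. -/
theorem stmt_14 (d : ℤ) (hd : 2 ≤ d) (F G Fi : ℝ → ℝ)
    (hFmono : StrictMono F) (hGmono : StrictMono G)
    (hFsm : ContDiff ℝ (⊤ : ℕ∞) F) (hGsm : ContDiff ℝ (⊤ : ℕ∞) G)
    (hFper : ∀ x, F (x + 1) = F x + d) (hGper : ∀ x, G (x + 1) = G x + d)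
    (hF0 : F 0 = 0) (hG0 : G 0 = 0)
    (hF' : ∀ x, 1 < deriv F x) (hG' : ∀ x, 1 < deriv G x)
    (hFi1 : Function.LeftInverse Fi F) (hFi2 : Function.RightInverse Fi F) :
    (∀ x : ℝ, ∃ L : ℝ, Tendsto (fun n => Fi^[n] (G^[n] x)) atTop (nhds L)) ∧
    (∀ h : ℝ → ℝ, (∀ x, Tendsto (fun n => Fi^[n] (G^[n] x)) atTop (nhds (h x))) →
      StrictMono h ∧ (∃ e : Homeomorph ℝ ℝ, ⇑e = h) ∧
      (∀ x, h (x + 1) = h x + 1) ∧ h ∘ G = F ∘ h) := by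
  obtain ⟨lF, hlF1, hlF⟩ := stmt14_expand d F hFsm hFper hF'
  obtain ⟨lG, hlG1, hlG⟩ := stmt14_expand d G hGsm hGper hG'
  have hlF0 : (0:ℝ) < lF := lt_trans one_pos hlF1
  set r : ℝ := lF⁻¹ with hr_def
  have hr0 : 0 < r := inv_pos.2 hlF0
  have hr1 : r < 1 := inv_lt_one_of_one_lt₀ hlF1
  have hrl : lF * r = 1 := mul_inv_cancel₀ (ne_of_gt hlF0)
  -- basic facts about Fi
  have hFsurj : Function.Surjective F := fun y => ⟨Fi y, hFi2 y⟩
  have hFimono : Monotone Fi := fun a b hab =>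
    hFmono.le_iff_le.mp (by rw [hFi2 a, hFi2 b]; exact hab)
  set eF : ℝ ≃o ℝ := StrictMono.orderIsoOfSurjective F hFmono hFsurj with heF
  have hFieq : Fi = ⇑eF.symm := by
    funext y
    apply hFmono.injective
    rw [hFi2]
    have h1 : F (eF.symm y) = eF (eF.symm y) := rfl
    rw [h1, eF.apply_symm_apply]
  have hFicont : Continuous Fi := by rw [hFieq]; exact (OrderIso.continuous _)
  have hGcont : Continuous G := hGsm.continuous
  -- contraction of Fi
  have hcontr0 : ∀ a b : ℝ, b ≤ a → Fi a - Fi b ≤ r * (a - b) := by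
    intro a b hba
    have h1 : lF * (Fi a - Fi b) ≤ F (Fi a) - F (Fi b) := hlF _ _ (hFimono hba)
    rw [hFi2, hFi2] at h1
    nlinarith [hr0]
  have hcontr : ∀ a b : ℝ, |Fi a - Fi b| ≤ r * |a - b| := by
    intro a b
    rcases le_total b a with hab | hab
    · rw [abs_of_nonneg (sub_nonneg.2 (hFimono hab)), abs_of_nonneg (sub_nonneg.2 hab)]
      exact hcontr0 a b hab
    · rw [abs_sub_comm, abs_sub_comm a b,
        abs_of_nonneg (sub_nonneg.2 (hFimono hab)), abs_of_nonneg (sub_nonneg.2 hab)]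
      exact hcontr0 b a hab
  have hcontrn : ∀ (n : ℕ) (a b : ℝ), |Fi^[n] a - Fi^[n] b| ≤ r ^ n * |a - b| := by
    intro n
    induction n with
    | zero => intro a b; simp
    | succ n ih =>
        intro a b
        rw [Function.iterate_succ_apply', Function.iterate_succ_apply']
        calc |Fi (Fi^[n] a) - Fi (Fi^[n] b)| ≤ r * |Fi^[n] a - Fi^[n] b| := hcontr _ _
          _ ≤ r * (r ^ n * |a - b|) := mul_le_mul_of_nonneg_left (ih a b) hr0.le
          _ = r ^ (n+1) * |a - b| := by ring
  -- integer periodicity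
  have hFint := stmt14_per_int d F hFper
  have hGint := stmt14_per_int d G hGper
  have hFiint : ∀ (k : ℤ) (s : ℝ), Fi (s + k * d) = Fi s + k := by
    intro k s
    have h1 : F (Fi s + k) = s + k * d := by rw [hFint k (Fi s), hFi2]
    rw [← h1, hFi1]
  have hGiter : ∀ (n : ℕ) (x : ℝ), G^[n] (x + 1) = G^[n] x + ((d ^ n : ℤ) : ℝ) := by
    intro n
    induction n with
    | zero => intro x; simp
    | succ n ih =>
        intro x
        rw [Function.iterate_succ_apply', Function.iterate_succ_apply', ih,
          hGint (d ^ n) (G^[n] x)]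
        push_cast; ring
  have hFiiter : ∀ (n : ℕ) (s : ℝ), Fi^[n] (s + ((d ^ n : ℤ) : ℝ)) = Fi^[n] s + 1 := by
    intro n
    induction n with
    | zero => intro s; simp
    | succ n ih =>
        intro s
        have h1 : (s + ((d ^ (n+1) : ℤ) : ℝ)) = s + ((d ^ n : ℤ) : ℝ) * d := by push_cast; ring
        rw [Function.iterate_succ_apply, Function.iterate_succ_apply, h1,
          hFiint (d ^ n) s, ih]
  -- bounded displacement of Fi ∘ G
  set φ : ℝ → ℝ := fun y => Fi (G y) - y with hφ
  have hφcont : Continuous φ := (hFicont.comp hGcont).sub continuous_id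
  have hφper : Function.Periodic φ 1 := by
    intro y
    have h1 : Fi (G y + (d:ℝ)) = Fi (G y) + 1 := by
      have h2 := hFiint 1 (G y)
      push_cast at h2
      simpa using h2
    show Fi (G (y + 1)) - (y + 1) = Fi (G y) - y
    rw [hGper y, h1]; ring
  obtain ⟨m, hm, hmax⟩ := isCompact_Icc.exists_isMaxOn (Set.nonempty_Icc.2 zero_le_one)
    ((continuous_abs.comp hφcont).continuousOn (s := Set.Icc (0:ℝ) 1))
  set C : ℝ := |φ m| with hC_def
  have hC : ∀ y, |φ y| ≤ C := by
    intro y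
    have h1 : φ (Int.fract y) = φ y := by
      have h := hφper.sub_int_mul_eq (x := y) ⌊y⌋
      rw [mul_one] at h
      rw [Int.fract]; exact h
    rw [← h1]
    exact hmax ⟨Int.fract_nonneg y, (Int.fract_lt_one y).le⟩
  have hC0 : 0 ≤ C := (abs_nonneg _).trans (hC 0 |>.trans_eq rfl) |>.trans (le_refl C) |>.trans (le_refl C)
  -- the key geometric estimate
  have hkey : ∀ (x : ℝ) (n : ℕ),
      dist (Fi^[n] (G^[n] x)) (Fi^[n+1] (G^[n+1] x)) ≤ C * r ^ n := by
    intro x n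
    rw [Real.dist_eq, Function.iterate_succ_apply (f := Fi),
      Function.iterate_succ_apply' (f := G)]
    calc |Fi^[n] (G^[n] x) - Fi^[n] (Fi (G (G^[n] x)))|
        ≤ r ^ n * |G^[n] x - Fi (G (G^[n] x))| := hcontrn n _ _
      _ ≤ r ^ n * C := by
          apply mul_le_mul_of_nonneg_left _ (pow_nonneg hr0.le n)
          rw [abs_sub_comm]
          exact hC (G^[n] x)
      _ = C * r ^ n := by ring
  have hcauchy : ∀ x : ℝ, CauchySeq (fun n => Fi^[n] (G^[n] x)) :=
    fun x => cauchySeq_of_le_geometric r C hr1 (hkey x)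
  have hex : ∀ x : ℝ, ∃ L : ℝ, Tendsto (fun n => Fi^[n] (G^[n] x)) atTop (nhds L) :=
    fun x => cauchySeq_tendsto_of_complete (hcauchy x)
  refine ⟨hex, ?_⟩
  intro h hup
  -- monotone
  have humono : ∀ n : ℕ, Monotone (fun x => Fi^[n] (G^[n] x)) :=
    fun n => (hFimono.iterate n).comp (hGmono.monotone.iterate n)
  have hmono : Monotone h := fun x y hxy =>
    le_of_tendsto_of_tendsto' (hup x) (hup y) (fun n => humono n hxy)
  -- periodicity of h
  have hper1 : ∀ x, h (x + 1) = h x + 1 := by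
    intro x
    have t1 : Tendsto (fun n => Fi^[n] (G^[n] (x+1))) atTop (nhds (h x + 1)) := by
      have heq : (fun n => Fi^[n] (G^[n] (x+1))) = fun n => Fi^[n] (G^[n] x) + 1 := by
        funext n; rw [hGiter n x, hFiiter n]
      rw [heq]
      exact (hup x).add_const 1
    exact tendsto_nhds_unique (hup (x+1)) t1
  -- conjugacy
  have hconj : ∀ x, h (G x) = F (h x) := by
    intro x
    have t2 : Tendsto (fun n => F (Fi^[n+1] (G^[n+1] x))) atTop (nhds (F (h x))) :=
      (hFsm.continuous.tendsto (h x)).comp ((hup x).comp (tendsto_add_atTop_nat 1))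
    have heq : (fun n => F (Fi^[n+1] (G^[n+1] x))) = fun n => Fi^[n] (G^[n] (G x)) := by
      funext n
      rw [Function.iterate_succ_apply' (f := Fi), hFi2, Function.iterate_succ_apply (f := G)]
    rw [heq] at t2
    exact tendsto_nhds_unique (hup (G x)) t2
  -- continuity via uniform convergence
  have hdist : ∀ (x : ℝ) (n : ℕ), dist (Fi^[n] (G^[n] x)) (h x) ≤ C * r ^ n / (1 - r) :=
    fun x n => dist_le_of_le_geometric_of_tendsto r C hr1 (hkey x) (hup x) n
  have hTU : TendstoUniformly (fun n x => Fi^[n] (G^[n] x)) h atTop := by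
    rw [Metric.tendstoUniformly_iff]
    intro ε hε
    have hto : Tendsto (fun n : ℕ => C * r ^ n / (1 - r)) atTop (nhds 0) := by
      have h1 := tendsto_pow_atTop_nhds_zero_of_lt_one hr0.le hr1
      have h2 := (h1.const_mul C).div_const (1 - r)
      simpa using h2
    filter_upwards [hto.eventually (gt_mem_nhds hε)] with n hn x
    calc dist (h x) (Fi^[n] (G^[n] x)) = dist (Fi^[n] (G^[n] x)) (h x) := dist_comm _ _
      _ ≤ C * r ^ n / (1 - r) := hdist x n
      _ < ε := hn
  have hcont : Continuous h :=
    hTU.continuous (Eventually.of_forall (f := atTop) fun n => (hFicont.iterate n).comp (hGcont.iterate n)).frequently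
  -- strict monotonicity
  have hGexp : ∀ (n : ℕ) (x y : ℝ), x ≤ y → lG ^ n * (y - x) ≤ G^[n] y - G^[n] x := by
    intro n
    induction n with
    | zero => intro x y hxy; simp
    | succ n ih =>
        intro x y hxy
        have h1 := ih x y hxy
        have h2 := hlG (G^[n] x) (G^[n] y) (hGmono.monotone.iterate n hxy)
        rw [Function.iterate_succ_apply' (f := G), Function.iterate_succ_apply' (f := G)]
        have hlG0 : (0:ℝ) < lG := lt_trans one_pos hlG1
        calc lG ^ (n+1) * (y - x) = lG * (lG ^ n * (y - x)) := by ring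
          _ ≤ lG * (G^[n] y - G^[n] x) := mul_le_mul_of_nonneg_left h1 hlG0.le
          _ ≤ G (G^[n] y) - G (G^[n] x) := h2
  have hconjn : ∀ (n : ℕ) (x : ℝ), h (G^[n] x) = F^[n] (h x) := by
    intro n
    induction n with
    | zero => intro x; simp
    | succ n ih =>
        intro x
        rw [Function.iterate_succ_apply' (f := G), Function.iterate_succ_apply' (f := F),
          hconj, ih]
  have hsm : StrictMono h := by
    intro x y hxy
    refine lt_of_le_of_ne (hmono hxy.le) ?_
    intro heq
    have hpos : (0:ℝ) < y - x := sub_pos.2 hxy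
    obtain ⟨n, hn⟩ : ∃ n : ℕ, 1 ≤ lG ^ n * (y - x) := by
      obtain ⟨n, hn⟩ := pow_unbounded_of_one_lt (y - x)⁻¹ hlG1
      refine ⟨n, ?_⟩
      have h1 : (y - x) * (y - x)⁻¹ = 1 := mul_inv_cancel₀ (ne_of_gt hpos)
      nlinarith
    have h2 : G^[n] x + 1 ≤ G^[n] y := by
      have := hGexp n x y hxy.le; linarith
    have e1 : h (G^[n] y) = h (G^[n] x) := by rw [hconjn, hconjn, heq]
    have e2 : h (G^[n] x) + 1 ≤ h (G^[n] y) := by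
      have h3 := hmono h2
      rw [hper1] at h3
      exact h3
    linarith
  -- surjectivity
  have hnat : ∀ (n : ℕ) (x : ℝ), h (x + n) = h x + n := by
    intro n
    induction n with
    | zero => intro x; simp
    | succ n ih =>
        intro x
        have h1 : (x + (↑(n+1) : ℝ)) = (x + n) + 1 := by push_cast; ring
        rw [h1, hper1, ih]; push_cast; ring
  have htop : Tendsto h atTop atTop := by
    apply tendsto_atTop_atTop_of_monotone hmono
    intro b
    refine ⟨(⌈b - h 0⌉₊ : ℝ), ?_⟩
    have h1 := hnat ⌈b - h 0⌉₊ 0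
    rw [zero_add] at h1
    rw [h1]
    have h2 := Nat.le_ceil (b - h 0)
    linarith
  have hbot : Tendsto h atBot atBot := by
    apply tendsto_atBot_atBot_of_monotone hmono
    intro b
    refine ⟨-(⌈h 0 - b⌉₊ : ℝ), ?_⟩
    have h1 := hnat ⌈h 0 - b⌉₊ (-(⌈h 0 - b⌉₊ : ℝ))
    rw [neg_add_cancel] at h1
    have h2 := Nat.le_ceil (h 0 - b)
    linarith
  have hsurj : Function.Surjective h := hcont.surjective htop hbot
  refine ⟨hsm, ⟨(StrictMono.orderIsoOfSurjective h hsm hsurj).toHomeomorph, rfl⟩,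
    hper1, funext fun x => (hconj x).trans rfl⟩
end
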